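/- arXiv:1810.00508 — 5 statements merged into one kernel-verified Lean document; each statement's English description precedes it below -/
import Mathlib

section
/- Let f(x,y) be a Laurent polynomial over a field K whose Newton polytope is contained in a triangle Δ. Suppose Δ has an edge E whose only integral points are its two endpoints, and the coefficients of f at both endpoints of E are nonzero. Then f is irreducible in the Laurent polynomial ring K[x^{±1}, y^{±1}]. -/
noncomputable section

/-- Laurent polynomials in two variables over `K`. -/
abbrev LP (K : Type*) [Field K] := AddMonoidAlgebra K (ℤ × ℤ)

/-- Embedding of lattice points into the real plane. -/
def toR : ℤ × ℤ → ℝ × ℝ := fun p => ((p.1 : ℝ), (p.2 : ℝ))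

/-- The Newton polytope of a Laurent polynomial: convex hull of its exponent vectors. -/
def newtonPolytope {K : Type*} [Field K] (f : LP K) : Set (ℝ × ℝ) :=
  convexHull ℝ (toR '' (f.coeff.support : Set (ℤ × ℤ)))

/-!
For an additive weight `φ`, the initial form `in_φ` (the terms of maximal weight) is
multiplicative, as in Ostrowski's theorem `N(gh) = N(g) + N(h)`. Let `λ` be the weight maximised
on the edge `E = [a, b]` of `Δ`, so that `in_λ f` is supported on `{a, b}`. Since `E` is
primitive there is an integral functional `ρ` with `ρ b - ρ a = 1`; the `ρ`-widths of supports
add under multiplication, so if `f = g h` one of `in_λ g`, `in_λ h`, say the first, is a monomial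
`x^p`. Then `a - p` and `b - p` lie in the support of `h`, and comparing maxima of the three
weights attached to the edges of `Δ` (each maximised at `a` or at `b`) shows that `p` maximises
all three on the support of `g`. These weights sum to zero, so the support of `g` is `{p}` and
`g` is a unit.
-/

namespace AddMonoidAlgebra

variable {R G Γ : Type*} [Semiring R] [AddMonoid G] [AddCommGroup Γ] [LinearOrder Γ]

/-- Junk value `0` for `g = 0`. -/
def maxWeight (φ : G →+ Γ) (g : R[G]) : Γ :=
  if h : g.coeff.support.Nonempty then g.coeff.support.sup' h φ else 0

lemma le_maxWeight (φ : G →+ Γ) {g : R[G]} {p : G} (hp : p ∈ g.coeff.support) :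
    φ p ≤ maxWeight φ g := by
  rw [maxWeight, dif_pos ⟨p, hp⟩]
  exact Finset.le_sup' φ hp

lemma exists_maxWeight_eq (φ : G →+ Γ) {g : R[G]} (hg : g ≠ 0) :
    ∃ p ∈ g.coeff.support, φ p = maxWeight φ g := by
  have hne : g.coeff.support.Nonempty := by simpa using hg
  obtain ⟨p, hp, hmax⟩ := Finset.exists_mem_eq_sup' hne φ
  exact ⟨p, hp, by rw [maxWeight, dif_pos hne, hmax]⟩

lemma maxWeight_le (φ : G →+ Γ) {g : R[G]} (hg : g ≠ 0) {M : Γ}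
    (h : ∀ p ∈ g.coeff.support, φ p ≤ M) : maxWeight φ g ≤ M := by
  obtain ⟨p, hp, hpM⟩ := exists_maxWeight_eq φ hg
  exact hpM ▸ h p hp

open scoped Classical in
def initialForm (φ : G →+ Γ) (g : R[G]) : R[G] :=
  ofCoeff (g.coeff.filter fun p => φ p = maxWeight φ g)

lemma coeff_initialForm (φ : G →+ Γ) (g : R[G]) (p : G) :
    (initialForm φ g).coeff p = if φ p = maxWeight φ g then g.coeff p else 0 := by
  classical
  exact Finsupp.filter_apply ..

lemma mem_support_initialForm {φ : G →+ Γ} {g : R[G]} {p : G} :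
    p ∈ (initialForm φ g).coeff.support ↔ p ∈ g.coeff.support ∧ φ p = maxWeight φ g := by
  simp only [Finsupp.mem_support_iff, coeff_initialForm, ne_eq, ite_eq_right_iff, Classical.not_imp]
  tauto

lemma initialForm_ne_zero (φ : G →+ Γ) {g : R[G]} (hg : g ≠ 0) : initialForm φ g ≠ 0 := by
  obtain ⟨p, hp, hpM⟩ := exists_maxWeight_eq φ hg
  intro h0
  have hcoeff := congrArg (fun u : R[G] => u.coeff p) h0
  simp only [coeff_initialForm, if_pos hpM, coeff_zero] at hcoeff
  exact Finsupp.mem_support_iff.mp hp hcoeff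

lemma weight_eq_of_mem_support_initialForm_mul (φ : G →+ Γ) (g h : R[G]) {x : G}
    (hx : x ∈ (initialForm φ g * initialForm φ h).coeff.support) :
    φ x = maxWeight φ g + maxWeight φ h := by
  classical
  obtain ⟨p, hp, q, hq, rfl⟩ := Finset.mem_add.mp (support_coeff_mul_subset _ _ hx)
  rw [map_add, (mem_support_initialForm.mp hp).2, (mem_support_initialForm.mp hq).2]

def weightWidth (φ : G →+ Γ) (g : R[G]) : Γ :=
  maxWeight φ g + maxWeight (-φ) g

lemma weightWidth_le (φ : G →+ Γ) {g : R[G]} (hg : g ≠ 0) {c : Γ}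
    (h : ∀ p ∈ g.coeff.support, ∀ q ∈ g.coeff.support, φ p - φ q ≤ c) : weightWidth φ g ≤ c := by
  obtain ⟨p, hp, hpM⟩ := exists_maxWeight_eq φ hg
  obtain ⟨q, hq, hqM⟩ := exists_maxWeight_eq (-φ) hg
  rw [weightWidth, ← hpM, ← hqM, AddMonoidHom.neg_apply, ← sub_eq_add_neg]
  exact h p hp q hq

variable [IsOrderedAddMonoid Γ]

lemma coeff_mul_eq_coeff_initialForm_mul (φ : G →+ Γ) (g h : R[G]) {x : G}
    (hx : φ x = maxWeight φ g + maxWeight φ h) :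
    (g * h).coeff x = (initialForm φ g * initialForm φ h).coeff x := by
  classical
  have hsub (u : R[G]) : (initialForm φ u).coeff.support ⊆ u.coeff.support :=
    fun p hp => (mem_support_initialForm.mp hp).1
  rw [coeff_mul, coeff_mul, Finsupp.sum_of_support_subset _ (hsub g) _ (by simp)]
  refine Finset.sum_congr rfl fun p hp => ?_
  rw [Finsupp.sum_of_support_subset _ (hsub h) _ (by simp)]
  refine Finset.sum_congr rfl fun q hq => ?_
  dsimp only
  split_ifs with hpq
  · have hsum : φ p + φ q = maxWeight φ g + maxWeight φ h := by rw [← map_add, hpq, hx]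
    obtain ⟨hpM, hqM⟩ := (add_eq_add_iff_eq_and_eq (le_maxWeight φ hp) (le_maxWeight φ hq)).mp hsum
    rw [coeff_initialForm, coeff_initialForm, if_pos hpM, if_pos hqM]
  · rfl

lemma sub_le_weightWidth (φ : G →+ Γ) {g : R[G]} {p q : G} (hp : p ∈ g.coeff.support)
    (hq : q ∈ g.coeff.support) : φ p - φ q ≤ weightWidth φ g :=
  (sub_eq_add_neg (φ p) (φ q)).trans_le (add_le_add (le_maxWeight φ hp) (le_maxWeight (-φ) hq))

lemma weightWidth_nonneg (φ : G →+ Γ) {g : R[G]} (hg : g ≠ 0) : 0 ≤ weightWidth φ g := by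
  obtain ⟨p, hp, -⟩ := exists_maxWeight_eq φ hg
  simpa using sub_le_weightWidth φ hp hp

variable [NoZeroDivisors R[G]]

lemma maxWeight_mul (φ : G →+ Γ) {g h : R[G]} (hg : g ≠ 0) (hh : h ≠ 0) :
    maxWeight φ (g * h) = maxWeight φ g + maxWeight φ h := by
  classical
  refine le_antisymm (maxWeight_le φ (mul_ne_zero hg hh) fun s hs => ?_) ?_
  · obtain ⟨p, hp, q, hq, rfl⟩ := Finset.mem_add.mp (support_coeff_mul_subset _ _ hs)
    rw [map_add]
    exact add_le_add (le_maxWeight φ hp) (le_maxWeight φ hq)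
  · obtain ⟨s, hs⟩ : (initialForm φ g * initialForm φ h).coeff.support.Nonempty := by
      simpa using mul_ne_zero (initialForm_ne_zero φ hg) (initialForm_ne_zero φ hh)
    have hx := weight_eq_of_mem_support_initialForm_mul φ g h hs
    rw [← hx]
    refine le_maxWeight φ ?_
    rwa [Finsupp.mem_support_iff, coeff_mul_eq_coeff_initialForm_mul φ g h hx, ← Finsupp.mem_support_iff]

lemma initialForm_mul (φ : G →+ Γ) {g h : R[G]} (hg : g ≠ 0) (hh : h ≠ 0) :
    initialForm φ (g * h) = initialForm φ g * initialForm φ h := by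
  ext x
  rw [coeff_initialForm, maxWeight_mul φ hg hh]
  split_ifs with hx
  · exact coeff_mul_eq_coeff_initialForm_mul φ g h hx
  · by_contra hne
    exact hx (weight_eq_of_mem_support_initialForm_mul φ g h
      (Finsupp.mem_support_iff.mpr (Ne.symm hne)))

lemma weightWidth_mul (φ : G →+ Γ) {g h : R[G]} (hg : g ≠ 0) (hh : h ≠ 0) :
    weightWidth φ (g * h) = weightWidth φ g + weightWidth φ h := by
  simp only [weightWidth, maxWeight_mul _ hg hh]
  abel

lemma maxWeight_le_of_maxWeight_mul_le (φ : G →+ Γ) {g h : R[G]} (hg : g ≠ 0) (hh : h ≠ 0)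
    {p q : G} (hq : q ∈ h.coeff.support) (hpq : maxWeight φ (g * h) ≤ φ (p + q)) :
    maxWeight φ g ≤ φ p := by
  rw [maxWeight_mul φ hg hh, map_add] at hpq
  exact le_of_add_le_add_right (hpq.trans (add_le_add_right (le_maxWeight φ hq) _))

lemma map_eq_of_isUnit [Nontrivial R] (φ : G →+ Γ) {g : R[G]} (hu : IsUnit g) {p q : G}
    (hp : p ∈ g.coeff.support) (hq : q ∈ g.coeff.support) : φ p = φ q := by
  classical
  obtain ⟨w, hw⟩ := hu.exists_right_inv
  have hg : g ≠ 0 := left_ne_zero_of_mul_eq_one hw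
  have hw0 : w ≠ 0 := right_ne_zero_of_mul_eq_one hw
  have hone : weightWidth φ (1 : R[G]) ≤ 0 := by
    refine weightWidth_le φ one_ne_zero fun p hp q hq => ?_
    rw [Finset.mem_zero.mp (support_coeff_one_subset hp),
      Finset.mem_zero.mp (support_coeff_one_subset hq), sub_self]
  have hwidth : weightWidth φ g ≤ 0 := by
    rw [← hw, weightWidth_mul φ hg hw0] at hone
    exact le_of_add_le_of_nonneg_left hone (weightWidth_nonneg φ hw0)
  exact le_antisymm (sub_nonpos.mp ((sub_le_weightWidth φ hp hq).trans hwidth))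
    (sub_nonpos.mp ((sub_le_weightWidth φ hq hp).trans hwidth))

end AddMonoidAlgebra

lemma AddMonoidAlgebra.isUnit_single {R G : Type*} [DivisionSemiring R] [AddGroup G] (p : G)
    {c : R} (hc : c ≠ 0) : IsUnit (AddMonoidAlgebra.single p c) :=
  ⟨⟨_, AddMonoidAlgebra.single (-p) c⁻¹, by simp [hc, AddMonoidAlgebra.one_def],
    by simp [hc, AddMonoidAlgebra.one_def]⟩, rfl⟩

lemma AffineBasis.lineMap_coord_eq_self {k V : Type*} [CommRing k] [AddCommGroup V] [Module k V]
    (T : AffineBasis (Fin 3) k V) {x : V} (hx : T.coord 2 x = 0) :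
    AffineMap.lineMap (T 0) (T 1) (T.coord 1 x) = x := by
  have hsum := T.sum_coord_apply_eq_one x
  have hcomb := T.linear_combination_coord_eq_self x
  rw [Fin.sum_univ_three] at hsum hcomb
  conv_rhs => rw [← hcomb]
  rw [AffineMap.lineMap_apply_module, hx, zero_smul, add_zero]
  congr 2
  rw [hx] at hsum
  linear_combination -hsum

lemma AffineBasis.mem_segment_of_coord_eq_zero {V : Type*} [AddCommGroup V] [Module ℝ V]
    (T : AffineBasis (Fin 3) ℝ V) {x : V} (hx : ∀ i, 0 ≤ T.coord i x) (hx2 : T.coord 2 x = 0) :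
    x ∈ segment ℝ (T 0) (T 1) := by
  rw [segment_eq_image_lineMap]
  refine ⟨T.coord 1 x, ⟨hx 1, ?_⟩, T.lineMap_coord_eq_self hx2⟩
  have hsum := T.sum_coord_apply_eq_one x
  rw [Fin.sum_univ_three] at hsum
  linarith [hx 0]

def triangleBasis {A B C : ℝ × ℝ} (h : AffineIndependent ℝ ![A, B, C]) :
    AffineBasis (Fin 3) ℝ (ℝ × ℝ) :=
  ⟨![A, B, C], h, h.affineSpan_eq_top_iff_card_eq_finrank_add_one.mpr (by simp)⟩

lemma coord_triangleBasis_nonneg {A B C : ℝ × ℝ} (h : AffineIndependent ℝ ![A, B, C]) {x : ℝ × ℝ}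
    (hx : x ∈ convexHull ℝ {A, B, C}) (i : Fin 3) : 0 ≤ (triangleBasis h).coord i x := by
  have hrange : Set.range (triangleBasis h) = {A, B, C} := by
    change Set.range ![A, B, C] = _
    rw [Matrix.range_cons, Matrix.range_cons_cons_empty, Set.singleton_union]
  rw [← hrange, AffineBasis.convexHull_eq_nonneg_coord] at hx
  exact hx i

lemma toR_injective : Function.Injective toR :=
  Prod.map_injective.mpr ⟨Int.cast_injective, Int.cast_injective⟩

def toRHom : ℤ × ℤ →+ ℝ × ℝ := (Int.castAddHom ℝ).prodMap (Int.castAddHom ℝ)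

lemma coe_toRHom : ⇑toRHom = toR := rfl

/-- On the triangle, maximal exactly on the edge opposite `T i`. -/
def coordWeight {ι : Type*} (T : AffineBasis ι ℝ (ℝ × ℝ)) (i : ι) : ℤ × ℤ →+ ℝ :=
  -((T.coord i).linear.toAddMonoidHom.comp toRHom)

lemma coordWeight_sub {ι : Type*} (T : AffineBasis ι ℝ (ℝ × ℝ)) (i : ι) (p q : ℤ × ℤ) :
    coordWeight T i p - coordWeight T i q = T.coord i (toR q) - T.coord i (toR p) := by
  have h := (T.coord i).linearMap_vsub (toR q) (toR p)
  rw [vsub_eq_sub, vsub_eq_sub, map_sub] at h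
  simp only [coordWeight, AddMonoidHom.neg_apply, AddMonoidHom.comp_apply,
    LinearMap.toAddMonoidHom_coe, coe_toRHom]
  linarith

lemma coordWeight_le {ι : Type*} (T : AffineBasis ι ℝ (ℝ × ℝ)) {i : ι} {p q : ℤ × ℤ}
    (hp : 0 ≤ T.coord i (toR p)) (hq : T.coord i (toR q) = 0) :
    coordWeight T i p ≤ coordWeight T i q := by
  linarith [coordWeight_sub T i p q]

lemma eq_of_forall_coordWeight_le {ι : Type*} [Fintype ι] (T : AffineBasis ι ℝ (ℝ × ℝ))
    {p q : ℤ × ℤ} (h : ∀ i, coordWeight T i q ≤ coordWeight T i p) : q = p := by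
  have hle : ∀ i ∈ Finset.univ, T.coord i (toR p) ≤ T.coord i (toR q) :=
    fun i _ => by linarith [h i, coordWeight_sub T i q p]
  have heq := (Finset.sum_eq_sum_iff_of_le hle).mp
    (by rw [T.sum_coord_apply_eq_one, T.sum_coord_apply_eq_one])
  exact toR_injective (T.ext_elem fun i => (heq i (Finset.mem_univ i)).symm)

def linearForm (α β : ℤ) : ℤ × ℤ →+ ℤ :=
  α • AddMonoidHom.fst ℤ ℤ + β • AddMonoidHom.snd ℤ ℤ

lemma linearForm_apply (α β : ℤ) (p : ℤ × ℤ) : linearForm α β p = α * p.1 + β * p.2 := rfl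

lemma isCoprime_of_forall_mem_segment {a b : ℤ × ℤ} (hab : a ≠ b)
    (hedge : ∀ p : ℤ × ℤ, toR p ∈ segment ℝ (toR a) (toR b) → p = a ∨ p = b) :
    IsCoprime (b.1 - a.1) (b.2 - a.2) := by
  rw [Int.isCoprime_iff_gcd_eq_one]
  set n := Int.gcd (b.1 - a.1) (b.2 - a.2)
  have hn : n ≠ 0 := fun h => hab <| by
    obtain ⟨h1, h2⟩ := Int.gcd_eq_zero_iff.mp h
    ext <;> omega
  obtain ⟨e1, he1⟩ := Int.gcd_dvd_left (b.1 - a.1) (b.2 - a.2)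
  obtain ⟨e2, he2⟩ := Int.gcd_dvd_right (b.1 - a.1) (b.2 - a.2)
  -- `a + (b - a) / n` is a lattice point of the segment
  have hmem : toR (a + (e1, e2)) ∈ segment ℝ (toR a) (toR b) := by
    rw [segment_eq_image_lineMap]
    refine ⟨(n : ℝ)⁻¹, ⟨by positivity,
      inv_le_one_of_one_le₀ (by exact_mod_cast Nat.one_le_iff_ne_zero.mpr hn)⟩, ?_⟩
    have hn' : (n : ℝ) ≠ 0 := by exact_mod_cast hn
    have h1 : (b.1 : ℝ) - a.1 = n * e1 := by exact_mod_cast he1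
    have h2 : (b.2 : ℝ) - a.2 = n * e2 := by exact_mod_cast he2
    ext <;> simp only [toR, AffineMap.lineMap_apply_module, Prod.smul_mk, smul_eq_mul,
      Prod.mk_add_mk, Prod.fst_add, Prod.snd_add, Int.cast_add] <;> field_simp <;> linarith
  rcases hedge _ hmem with h | h <;> simp only [Prod.ext_iff, Prod.fst_add, Prod.snd_add] at h
  · obtain ⟨rfl, rfl⟩ : e1 = 0 ∧ e2 = 0 := by omega
    exact absurd (Prod.ext (by omega) (by omega)) hab
  · by_contra hn1
    have hn1' : (n : ℤ) - 1 ≠ 0 := by omega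
    have h1 : ((n : ℤ) - 1) * e1 = 0 := by linarith
    have h2 : ((n : ℤ) - 1) * e2 = 0 := by linarith
    obtain rfl := (mul_eq_zero.mp h1).resolve_left hn1'
    obtain rfl := (mul_eq_zero.mp h2).resolve_left hn1'
    exact hab (Prod.ext (by omega) (by omega))

lemma eq_of_coordWeight_eq_of_linearForm_eq (T : AffineBasis (Fin 3) ℝ (ℝ × ℝ)) {a b : ℤ × ℤ}
    (hTa : T 0 = toR a) (hTb : T 1 = toR b) {α β : ℤ}
    (hαβ : α * (b.1 - a.1) + β * (b.2 - a.2) = 1) {p q : ℤ × ℤ}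
    (hlam : coordWeight T 2 p = coordWeight T 2 q) (hρ : linearForm α β p = linearForm α β q) :
    p = q := by
  have hx : T.coord 2 (toR (a + p - q)) = 0 := by
    have := coordWeight_sub T 2 (a + p - q) a
    rw [map_sub, map_add, hlam, ← hTa, T.coord_apply_ne (by decide)] at this
    linarith
  -- so `p - q = t • (b - a)` for a real `t`, and `hρ` together with `hαβ` forces `t = 0`
  have hline := T.lineMap_coord_eq_self hx
  rw [hTa, hTb, AffineMap.lineMap_apply_module] at hline
  set t := T.coord 1 (toR (a + p - q))
  have h1 := congrArg Prod.fst hline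
  have h2 := congrArg Prod.snd hline
  simp only [toR, Prod.smul_mk, smul_eq_mul, Prod.mk_add_mk, Prod.fst_sub, Prod.fst_add,
    Int.cast_sub, Int.cast_add, Prod.snd_sub, Prod.snd_add] at h1 h2
  rw [linearForm_apply, linearForm_apply] at hρ
  have hρR : (α : ℝ) * p.1 + β * p.2 = α * q.1 + β * q.2 := by exact_mod_cast hρ
  have hαβR : (α : ℝ) * (b.1 - a.1) + β * (b.2 - a.2) = 1 := by exact_mod_cast hαβ
  have ht : t = 0 := by linear_combination (-t) * hαβR + α * h1 + β * h2 + hρR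
  rw [ht] at h1 h2
  exact Prod.ext (by exact_mod_cast (by linarith : (p.1 : ℝ) = q.1))
    (by exact_mod_cast (by linarith : (p.2 : ℝ) = q.2))

open AddMonoidAlgebra

section Triangle

variable {K : Type*} [Field K] {T : AffineBasis (Fin 3) ℝ (ℝ × ℝ)} {a b : ℤ × ℤ} {f : LP K}

lemma maxWeight_coordWeight_eq (hsupp : ∀ p ∈ f.coeff.support, ∀ i, 0 ≤ T.coord i (toR p))
    {i : Fin 3} {v : ℤ × ℤ} (hv : v ∈ f.coeff.support) (hvi : T.coord i (toR v) = 0) :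
    maxWeight (coordWeight T i) f = coordWeight T i v :=
  le_antisymm
    (maxWeight_le (coordWeight T i) (by rintro rfl; simp at hv)
      fun p hp => coordWeight_le T (hsupp p hp i) hvi)
    (le_maxWeight _ hv)

lemma support_initialForm_coordWeight_subset (hTa : T 0 = toR a) (hTb : T 1 = toR b)
    (hsupp : ∀ p ∈ f.coeff.support, ∀ i, 0 ≤ T.coord i (toR p)) (ha : a ∈ f.coeff.support)
    (hedge : ∀ p : ℤ × ℤ, toR p ∈ segment ℝ (toR a) (toR b) → p = a ∨ p = b) :
    (initialForm (coordWeight T 2) f).coeff.support ⊆ {a, b} := by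
  intro p hp
  obtain ⟨hpf, hpM⟩ := mem_support_initialForm.mp hp
  rw [maxWeight_coordWeight_eq hsupp ha (hTa ▸ T.coord_apply_ne (by decide))] at hpM
  have hp2 : T.coord 2 (toR p) = 0 := by
    have := coordWeight_sub T 2 p a
    rw [hpM, ← hTa, T.coord_apply_ne (by decide)] at this
    linarith [hsupp p hpf 2]
  have hseg := T.mem_segment_of_coord_eq_zero (hsupp p hpf) hp2
  rw [hTa, hTb] at hseg
  simpa using hedge p hseg

lemma weightWidth_initialForm_coordWeight_le_one (hTa : T 0 = toR a) (hTb : T 1 = toR b)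
    (hsupp : ∀ p ∈ f.coeff.support, ∀ i, 0 ≤ T.coord i (toR p)) (ha : a ∈ f.coeff.support)
    (hedge : ∀ p : ℤ × ℤ, toR p ∈ segment ℝ (toR a) (toR b) → p = a ∨ p = b) {α β : ℤ}
    (hαβ : α * (b.1 - a.1) + β * (b.2 - a.2) = 1) :
    weightWidth (linearForm α β) (initialForm (coordWeight T 2) f) ≤ 1 := by
  refine weightWidth_le _ (initialForm_ne_zero _ (by rintro rfl; simp at ha)) fun p hp q hq => ?_
  have hsub (x) (hx : x ∈ (initialForm (coordWeight T 2) f).coeff.support) : x = a ∨ x = b := by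
    simpa using support_initialForm_coordWeight_subset hTa hTb hsupp ha hedge hx
  have hρ : linearForm α β b - linearForm α β a = 1 := by
    rw [linearForm_apply, linearForm_apply, ← hαβ]
    ring
  rcases hsub p hp with rfl | rfl <;> rcases hsub q hq with rfl | rfl <;> omega

lemma isUnit_of_support_initialForm_eq_singleton (hTa : T 0 = toR a) (hTb : T 1 = toR b)
    (hsupp : ∀ p ∈ f.coeff.support, ∀ i, 0 ≤ T.coord i (toR p)) (ha : a ∈ f.coeff.support)
    (hb : b ∈ f.coeff.support) {g h : LP K} (hf : f = g * h) (hg : g ≠ 0) (hh : h ≠ 0)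
    {p : ℤ × ℤ} (hp : (initialForm (coordWeight T 2) g).coeff.support = {p}) : IsUnit g := by
  obtain ⟨-, hgp⟩ := Finsupp.support_eq_singleton.mp hp
  have hin : initialForm (coordWeight T 2) f =
      single p ((initialForm (coordWeight T 2) g).coeff p) * initialForm (coordWeight T 2) h := by
    rw [hf, initialForm_mul _ hg hh]
    exact congrArg (· * _) (coeff_injective hgp)
  have hpg : p ∈ g.coeff.support :=
    (mem_support_initialForm.mp (hp ▸ Finset.mem_singleton_self p)).1
  have hshift : ∀ v ∈ f.coeff.support, T.coord 2 (toR v) = 0 → -p + v ∈ h.coeff.support := by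
    intro v hv hv2
    have hcoeff := coeff_initialForm (coordWeight T 2) f v
    rw [maxWeight_coordWeight_eq hsupp hv hv2, if_pos rfl, hin, coeff_single_mul_apply] at hcoeff
    refine (mem_support_initialForm (φ := coordWeight T 2)).mp
      (Finsupp.mem_support_iff.mpr fun h0 => ?_) |>.1
    rw [h0, mul_zero] at hcoeff
    exact Finsupp.mem_support_iff.mp hv hcoeff.symm
  have hmax : ∀ i, maxWeight (coordWeight T i) g ≤ coordWeight T i p := by
    intro i
    obtain ⟨v, hv, hvi, hv2⟩ :
        ∃ v ∈ f.coeff.support, T.coord i (toR v) = 0 ∧ T.coord 2 (toR v) = 0 := by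
      fin_cases i
      · exact ⟨b, hb, hTb ▸ T.coord_apply_ne (by decide), hTb ▸ T.coord_apply_ne (by decide)⟩
      all_goals
        exact ⟨a, ha, hTa ▸ T.coord_apply_ne (by decide), hTa ▸ T.coord_apply_ne (by decide)⟩
    refine maxWeight_le_of_maxWeight_mul_le _ hg hh (hshift v hv hv2) ?_
    rw [← hf, add_neg_cancel_left, maxWeight_coordWeight_eq hsupp hv hvi]
  have hsupp_g : g.coeff.support = {p} := Finset.eq_singleton_iff_unique_mem.mpr
    ⟨hpg, fun q hq => eq_of_forall_coordWeight_le T fun i => (le_maxWeight _ hq).trans (hmax i)⟩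
  obtain ⟨hc, hg'⟩ := Finsupp.support_eq_singleton.mp hsupp_g
  rw [show g = single p (g.coeff p) from coeff_injective hg']
  exact isUnit_single p hc

lemma isUnit_of_weightWidth_initialForm_eq_zero (hTa : T 0 = toR a) (hTb : T 1 = toR b)
    (hsupp : ∀ p ∈ f.coeff.support, ∀ i, 0 ≤ T.coord i (toR p)) (ha : a ∈ f.coeff.support)
    (hb : b ∈ f.coeff.support) {α β : ℤ} (hαβ : α * (b.1 - a.1) + β * (b.2 - a.2) = 1)
    {g h : LP K} (hf : f = g * h) (hg : g ≠ 0) (hh : h ≠ 0)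
    (hW : weightWidth (linearForm α β) (initialForm (coordWeight T 2) g) = 0) : IsUnit g := by
  obtain ⟨p, hp⟩ : (initialForm (coordWeight T 2) g).coeff.support.Nonempty := by
    simpa using initialForm_ne_zero (coordWeight T 2) hg
  refine isUnit_of_support_initialForm_eq_singleton hTa hTb hsupp ha hb hf hg hh
    (Finset.eq_singleton_iff_unique_mem.mpr ⟨hp, fun q hq => ?_⟩)
  refine eq_of_coordWeight_eq_of_linearForm_eq T hTa hTb hαβ ?_ ?_
  · rw [(mem_support_initialForm.mp hq).2, (mem_support_initialForm.mp hp).2]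
  · have hqp := sub_le_weightWidth (linearForm α β) hq hp
    have hpq := sub_le_weightWidth (linearForm α β) hp hq
    omega

end Triangle

/-- Irreducibility criterion: if the Newton polytope of `f` lies in a (nondegenerate)
triangle having an edge whose only lattice points are its two endpoints, and the
coefficients of `f` at these endpoints are nonzero, then `f` is irreducible in
`K[x^{±1}, y^{±1}]`. -/
theorem stmt0 {K : Type*} [Field K] (f : LP K)
    (a b : ℤ × ℤ) (c : ℝ × ℝ)
    (htri : AffineIndependent ℝ ![toR a, toR b, c])
    (hsupp : newtonPolytope f ⊆ convexHull ℝ {toR a, toR b, c})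
    (hedge : ∀ p : ℤ × ℤ, toR p ∈ segment ℝ (toR a) (toR b) → p = a ∨ p = b)
    (ha : f.coeff a ≠ 0) (hb : f.coeff b ≠ 0) :
    Irreducible f := by
  set T := triangleBasis htri
  have hTa : T 0 = toR a := rfl
  have hTb : T 1 = toR b := rfl
  have hcoord : ∀ p ∈ f.coeff.support, ∀ i, 0 ≤ T.coord i (toR p) := fun p hp =>
    coord_triangleBasis_nonneg htri (hsupp (subset_convexHull ℝ _ ⟨p, hp, rfl⟩))
  have haf : a ∈ f.coeff.support := Finsupp.mem_support_iff.mpr ha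
  have hbf : b ∈ f.coeff.support := Finsupp.mem_support_iff.mpr hb
  have hab : a ≠ b := fun h => by simpa [h] using htri.injective.ne (show (0 : Fin 3) ≠ 1 by decide)
  obtain ⟨α, β, hαβ⟩ := isCoprime_of_forall_mem_segment hab hedge
  refine ⟨fun hu => ?_, fun g h hf => ?_⟩
  · have := map_eq_of_isUnit (linearForm α β) hu haf hbf
    rw [linearForm_apply, linearForm_apply] at this
    linarith
  have hg : g ≠ 0 := by rintro rfl; simp [hf] at ha
  have hh : h ≠ 0 := by rintro rfl; simp [hf] at ha
  have hW := weightWidth_initialForm_coordWeight_le_one hTa hTb hcoord haf hedge hαβ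
  rw [hf, initialForm_mul _ hg hh,
    weightWidth_mul _ (initialForm_ne_zero _ hg) (initialForm_ne_zero _ hh)] at hW
  have hWg := weightWidth_nonneg (linearForm α β) (initialForm_ne_zero (coordWeight T 2) hg)
  have hWh := weightWidth_nonneg (linearForm α β) (initialForm_ne_zero (coordWeight T 2) hh)
  obtain hWg0 | hWh0 : weightWidth (linearForm α β) (initialForm (coordWeight T 2) g) = 0 ∨
      weightWidth (linearForm α β) (initialForm (coordWeight T 2) h) = 0 := by omega
  · exact Or.inl (isUnit_of_weightWidth_initialForm_eq_zero hTa hTb hcoord haf hbf hαβ hf hg hh hWg0)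
  · exact Or.inr (isUnit_of_weightWidth_initialForm_eq_zero hTa hTb hcoord haf hbf hαβ
      (hf.trans (mul_comm g h)) hh hg hWh0)
end
end

section
/- Every face of the Minkowski sum of two polytopes P and Q in ℝⁿ is the Minkowski sum of a face of P and a face of Q. -/
open Pointwise

noncomputable section

/-- `F` is a face of `P`: the set of points of `P` maximizing some linear functional. -/
def IsFaceOf {n : ℕ} (F P : Set (EuclideanSpace ℝ (Fin n))) : Prop :=
  ∃ φ : EuclideanSpace ℝ (Fin n) →ₗ[ℝ] ℝ,
    F = {x ∈ P | ∀ y ∈ P, φ y ≤ φ x}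

/-- Every face of the Minkowski sum of two polytopes is the Minkowski sum of a face
of the first and a face of the second. -/
theorem stmt3 {n : ℕ} (S T : Finset (EuclideanSpace ℝ (Fin n)))
    (hS : S.Nonempty) (hT : T.Nonempty)
    (F : Set (EuclideanSpace ℝ (Fin n)))
    (hF : IsFaceOf F (convexHull ℝ (S : Set (EuclideanSpace ℝ (Fin n)))
            + convexHull ℝ (T : Set (EuclideanSpace ℝ (Fin n))))) :
    ∃ G H : Set (EuclideanSpace ℝ (Fin n)),
      IsFaceOf G (convexHull ℝ (S : Set (EuclideanSpace ℝ (Fin n)))) ∧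
      IsFaceOf H (convexHull ℝ (T : Set (EuclideanSpace ℝ (Fin n)))) ∧
      F = G + H := by
  obtain ⟨φ, hφ⟩ := hF
  set P : Set (EuclideanSpace ℝ (Fin n)) := convexHull ℝ (S : Set (EuclideanSpace ℝ (Fin n)))
  set Q : Set (EuclideanSpace ℝ (Fin n)) := convexHull ℝ (T : Set (EuclideanSpace ℝ (Fin n)))
  -- maximizers over the hulls
  obtain ⟨s₀, hs₀S, hs₀max⟩ := S.exists_max_image φ hS
  obtain ⟨t₀, ht₀T, ht₀max⟩ := T.exists_max_image φ hT
  have hPle : ∀ p ∈ P, φ p ≤ φ s₀ := fun p hp =>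
    convexHull_min (fun x hx => hs₀max x hx)
      (convex_halfSpace_le ⟨φ.map_add, φ.map_smul⟩ (φ s₀)) hp
  have hQle : ∀ q ∈ Q, φ q ≤ φ t₀ := fun q hq =>
    convexHull_min (fun x hx => ht₀max x hx)
      (convex_halfSpace_le ⟨φ.map_add, φ.map_smul⟩ (φ t₀)) hq
  have hs₀P : s₀ ∈ P := subset_convexHull ℝ _ hs₀S
  have ht₀Q : t₀ ∈ Q := subset_convexHull ℝ _ ht₀T
  refine ⟨{x ∈ P | ∀ y ∈ P, φ y ≤ φ x}, {x ∈ Q | ∀ y ∈ Q, φ y ≤ φ x},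
    ⟨φ, rfl⟩, ⟨φ, rfl⟩, ?_⟩
  rw [hφ]
  ext x
  constructor
  · rintro ⟨⟨p, hp, q, hq, rfl⟩, hmax⟩
    have h₀ : φ s₀ + φ t₀ ≤ φ p + φ q := by
      have := hmax (s₀ + t₀) ⟨s₀, hs₀P, t₀, ht₀Q, rfl⟩
      simpa [map_add] using this
    have hp' : φ p = φ s₀ := le_antisymm (hPle p hp) (by linarith [hQle q hq])
    have hq' : φ q = φ t₀ := le_antisymm (hQle q hq) (by linarith [hPle p hp])
    refine ⟨p, ⟨hp, fun y hy => hp' ▸ hPle y hy⟩, q, ⟨hq, fun y hy => hq' ▸ hQle y hy⟩, rfl⟩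
  · rintro ⟨p, ⟨hp, hpmax⟩, q, ⟨hq, hqmax⟩, rfl⟩
    refine ⟨⟨p, hp, q, hq, rfl⟩, ?_⟩
    rintro y ⟨p', hp', q', hq', rfl⟩
    simp only [map_add]
    exact add_le_add (hpmax p' hp') (hqmax q' hq')
end
end

section
/- A segment in ℝ² whose only lattice points are its two (lattice point) endpoints cannot be written as the Minkowski sum of two lattice polytopes each of positive dimension; in fact, if E = G + H with G, H lattice polytopes, then G or H is a single point. -/
/-!
Every sum `s + t` of lattice points `s ∈ S`, `t ∈ T` is a lattice point of the segment, hence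
`a` or `b`. If `S` and `T` both had two points, the four sums `sᵢ + tⱼ` would take two values
with `s₁ + t₁ = s₂ + t₂ ≠ s₁ + t₂ = s₂ + t₁`; adding up gives `2 (s₁ + t₁) = 2 (s₁ + t₂)`,
which forces `t₁ = t₂` in the torsion-free group `ℤ²`.
-/

open Pointwise

noncomputable section

theorem eq_of_ne_of_ne_of_mem_pair {α : Type*} {a b x y z : α} (hx : x = a ∨ x = b)
    (hy : y = a ∨ y = b) (hz : z = a ∨ z = b) (hxy : x ≠ y) (hyz : y ≠ z) : x = z := by
  rcases hx with rfl | rfl <;> rcases hy with rfl | rfl <;> rcases hz with rfl | rfl <;> tauto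

theorem subsingleton_or_subsingleton_of_add_subset_pair {M : Type*} [AddCancelCommMonoid M]
    [IsAddTorsionFree M] {S T : Set M} {a b : M} (h : S + T ⊆ {a, b}) :
    S.Subsingleton ∨ T.Subsingleton := by
  by_contra! hST
  obtain ⟨⟨s₁, hs₁, s₂, hs₂, hs⟩, ⟨t₁, ht₁, t₂, ht₂, ht⟩⟩ := hST
  have mem : ∀ s ∈ S, ∀ t ∈ T, s + t = a ∨ s + t = b := Set.add_subset_iff.1 h
  have diag : s₁ + t₁ = s₂ + t₂ :=
    eq_of_ne_of_ne_of_mem_pair (mem _ hs₁ _ ht₁) (mem _ hs₁ _ ht₂) (mem _ hs₂ _ ht₂)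
      (fun h ↦ ht (add_left_cancel h)) (fun h ↦ hs (add_right_cancel h))
  have antidiag : s₁ + t₂ = s₂ + t₁ :=
    eq_of_ne_of_ne_of_mem_pair (mem _ hs₁ _ ht₂) (mem _ hs₁ _ ht₁) (mem _ hs₂ _ ht₁)
      (fun h ↦ ht (add_left_cancel h).symm) (fun h ↦ hs (add_right_cancel h))
  have double : 2 • (s₁ + t₁) = 2 • (s₁ + t₂) := by
    calc 2 • (s₁ + t₁) = (s₁ + t₁) + (s₂ + t₂) := by rw [two_nsmul, diag]
      _ = (s₁ + t₂) + (s₂ + t₁) := by ac_rfl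
      _ = 2 • (s₁ + t₂) := by rw [two_nsmul, antidiag]
  exact ht (add_left_cancel (nsmul_right_injective two_ne_zero double))

theorem exists_convexHull_eq_singleton {𝕜 E : Type*} [Field 𝕜] [LinearOrder 𝕜]
    [IsStrictOrderedRing 𝕜] [AddCommGroup E] [Module 𝕜 E] {s : Set E} (hne : s.Nonempty)
    (hs : s.Subsingleton) : ∃ p, convexHull 𝕜 s = {p} := by
  obtain ⟨p, hp⟩ := hne
  exact ⟨p, by rw [hs.eq_singleton_of_mem hp, convexHull_singleton]⟩

theorem toR_add (p q : ℤ × ℤ) : toR (p + q) = toR p + toR q := by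
  simp [toR]

theorem add_subset_pair_of_segment_eq_add_convexHull {a b : ℤ × ℤ}
    (hedge : ∀ p : ℤ × ℤ, toR p ∈ segment ℝ (toR a) (toR b) → p = a ∨ p = b)
    {S T : Set (ℤ × ℤ)}
    (hsum : segment ℝ (toR a) (toR b) = convexHull ℝ (toR '' S) + convexHull ℝ (toR '' T)) :
    S + T ⊆ {a, b} := by
  refine Set.add_subset_iff.2 fun s hs t ht ↦ hedge _ ?_
  rw [toR_add, hsum]
  exact Set.add_mem_add (subset_convexHull ℝ _ ⟨s, hs, rfl⟩)
    (subset_convexHull ℝ _ ⟨t, ht, rfl⟩)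

theorem stmt4_general (a b : ℤ × ℤ)
    (hedge : ∀ p : ℤ × ℤ, toR p ∈ segment ℝ (toR a) (toR b) → p = a ∨ p = b)
    (S T : Finset (ℤ × ℤ)) (hS : S.Nonempty) (hT : T.Nonempty)
    (hsum : segment ℝ (toR a) (toR b)
      = convexHull ℝ (toR '' (S : Set (ℤ × ℤ))) + convexHull ℝ (toR '' (T : Set (ℤ × ℤ)))) :
    (∃ p : ℝ × ℝ, convexHull ℝ (toR '' (S : Set (ℤ × ℤ))) = {p}) ∨
    (∃ q : ℝ × ℝ, convexHull ℝ (toR '' (T : Set (ℤ × ℤ))) = {q}) := by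
  rcases subsingleton_or_subsingleton_of_add_subset_pair
      (add_subset_pair_of_segment_eq_add_convexHull hedge hsum) with hS₁ | hT₁
  · exact .inl (exists_convexHull_eq_singleton (hS.to_set.image toR)
      (hS₁.image toR))
  · exact .inr (exists_convexHull_eq_singleton (hT.to_set.image toR) (hT₁.image toR))

/-- A lattice segment whose only lattice points are its two (distinct) endpoints is not
the Minkowski sum of two lattice polytopes of positive dimension: if it is written as a
Minkowski sum of two lattice polytopes, one of them is a single point. -/
theorem stmt4 (a b : ℤ × ℤ) (hab : a ≠ b)
    (hedge : ∀ p : ℤ × ℤ, toR p ∈ segment ℝ (toR a) (toR b) → p = a ∨ p = b)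
    (S T : Finset (ℤ × ℤ)) (hS : S.Nonempty) (hT : T.Nonempty)
    (hsum : segment ℝ (toR a) (toR b)
      = convexHull ℝ (toR '' (S : Set (ℤ × ℤ))) + convexHull ℝ (toR '' (T : Set (ℤ × ℤ)))) :
    (∃ p : ℝ × ℝ, convexHull ℝ (toR '' (S : Set (ℤ × ℤ))) = {p}) ∨
    (∃ q : ℝ × ℝ, convexHull ℝ (toR '' (T : Set (ℤ × ℤ))) = {q}) :=
  stmt4_general a b hedge S T hS hT hsum
end
end

section
/- For every integer m ≥ 1, the triangle with vertices (-1,-1), (m-1,0), ((2m-3)/4, (2m-1)/2) contains exactly binomial(m+1,2) + 1 lattice points. -/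
/-!
The triangle is cut out by the half-planes `x ≤ m y + m - 1`, `y ≤ 2 x + 1` and
`2 x + y ≤ 2 m - 2`. Below the row `y = -1` the first two are incompatible, on that row they
leave only the vertex `(-1, -1)`, and on the row `y = j` with `0 ≤ j < m` they leave the `m - j`
integers `⌊j / 2⌋ ≤ x ≤ m - 1 - ⌈j / 2⌉`. Summing, `1 + ∑_{j < m} (m - j) = binomial(m+1, 2) + 1`.
-/

noncomputable section

theorem smul_add_smul_add_smul_mem_convexHull {E : Type*} [AddCommGroup E] [Module ℝ E]
    (A B C : E) {a b c : ℝ} (ha : 0 ≤ a) (hb : 0 ≤ b) (hc : 0 ≤ c) (habc : a + b + c = 1) :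
    a • A + b • B + c • C ∈ convexHull ℝ ({A, B, C} : Set E) := by
  have := (convex_convexHull ℝ ({A, B, C} : Set E)).sum_mem (t := Finset.univ)
    (w := ![a, b, c]) (z := ![A, B, C])
    (by intro i _; fin_cases i <;> assumption)
    (by simp [Fin.sum_univ_three, habc])
    (by intro i _; fin_cases i <;> exact subset_convexHull ℝ _ (by simp))
  simpa [Fin.sum_univ_three] using this

theorem convex_setOf_mul_add_mul_le (a b c : ℝ) :
    Convex ℝ {q : ℝ × ℝ | a * q.1 + b * q.2 ≤ c} :=
  convex_halfSpace_le ⟨fun p q => by simp only [Prod.fst_add, Prod.snd_add]; ring,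
    fun r p => by simp only [Prod.smul_fst, Prod.smul_snd, smul_eq_mul]; ring⟩ c

def triangle (m : ℕ) : Set (ℝ × ℝ) :=
  convexHull ℝ {((-1 : ℝ), (-1 : ℝ)), ((m : ℝ) - 1, 0),
    ((2 * (m : ℝ) - 3) / 4, (2 * (m : ℝ) - 1) / 2)}

theorem mem_triangle_iff {m : ℕ} (hm : 1 ≤ m) (x y : ℝ) :
    (x, y) ∈ triangle m ↔ x ≤ m * y + m - 1 ∧ y ≤ 2 * x + 1 ∧ 2 * x + y ≤ 2 * m - 2 := by
  have hm : (1 : ℝ) ≤ m := by exact_mod_cast hm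
  constructor
  · have hsub : triangle m ⊆ {q | 1 * q.1 + (-m) * q.2 ≤ m - 1} ∩
        {q | (-2) * q.1 + 1 * q.2 ≤ 1} ∩ {q | 2 * q.1 + 1 * q.2 ≤ 2 * m - 2} := by
      refine convexHull_min ?_ (((convex_setOf_mul_add_mul_le _ _ _).inter
        (convex_setOf_mul_add_mul_le _ _ _)).inter (convex_setOf_mul_add_mul_le _ _ _))
      rintro q (rfl | rfl | rfl) <;> refine ⟨⟨?_, ?_⟩, ?_⟩ <;> simp only [Set.mem_ofPred_eq] <;>
        nlinarith
    intro h
    obtain ⟨⟨h₁, h₂⟩, h₃⟩ := hsub h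
    simp only [Set.mem_ofPred_eq] at h₁ h₂ h₃
    refine ⟨?_, ?_, ?_⟩ <;> linarith
  · rintro ⟨h₁, h₂, h₃⟩
    have hd₁ : (0 : ℝ) < 2 * m + 1 := by linarith
    have hd₂ : (0 : ℝ) < 2 * m - 1 := by linarith
    -- barycentric coordinates of `(x, y)`
    set a : ℝ := (2 * m - 2 - 2 * x - y) / (2 * m + 1)
    set b : ℝ := (2 * x - y + 1) / (2 * m - 1)
    set c : ℝ := 4 * (m * y - x + m - 1) / ((2 * m - 1) * (2 * m + 1))
    have hxy : ((x, y) : ℝ × ℝ) = a • ((-1 : ℝ), (-1 : ℝ)) + b • ((m : ℝ) - 1, 0) +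
        c • ((2 * (m : ℝ) - 3) / 4, (2 * (m : ℝ) - 1) / 2) := by
      simp only [a, b, c, Prod.smul_mk, smul_eq_mul, Prod.mk_add_mk, Prod.mk.injEq]
      constructor <;> field_simp <;> ring
    rw [hxy]
    refine smul_add_smul_add_smul_mem_convexHull _ _ _ (div_nonneg (by linarith) hd₁.le)
      (div_nonneg (by linarith) hd₂.le) (div_nonneg (by linarith) (by positivity)) ?_
    simp only [a, b, c]
    field_simp
    ring

def triangleRow (m j : ℕ) : Finset (ℤ × ℤ) :=
  (Finset.Icc ((j : ℤ) / 2) (m - 1 - (j + 1) / 2)).image fun x => (x, (j : ℤ))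

def triangleLatticePoints (m : ℕ) : Finset (ℤ × ℤ) :=
  insert (-1, -1) ((Finset.range m).biUnion (triangleRow m))

theorem mem_triangleLatticePoints_iff {m : ℕ} (hm : 1 ≤ m) (x y : ℤ) :
    (x, y) ∈ triangleLatticePoints m ↔
      x ≤ m * y + m - 1 ∧ y ≤ 2 * x + 1 ∧ 2 * x + y ≤ 2 * m - 2 := by
  simp only [triangleLatticePoints, triangleRow, Finset.mem_insert, Finset.mem_biUnion,
    Finset.mem_range, Finset.mem_image, Finset.mem_Icc, Prod.mk.injEq]
  constructor
  · rintro (⟨rfl, rfl⟩ | ⟨j, hj, x, hx, rfl, rfl⟩)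
    · lia
    · have : 0 ≤ (m : ℤ) * j := by positivity
      lia
  · rintro ⟨h₁, h₂, h₃⟩
    -- below the row `y = -1` the first two constraints are incompatible
    have hy : y + 1 ≤ 0 → m * (y + 1) ≤ y + 1 := fun hy => by
      have : (1 : ℤ) ≤ m := by exact_mod_cast hm
      nlinarith
    have : -1 ≤ y := by lia
    obtain rfl | hy₀ := this.eq_or_lt
    · left; lia
    · right
      exact ⟨y.toNat, by lia, x, by lia, rfl, by lia⟩

theorem card_triangleRow (m j : ℕ) : (triangleRow m j).card = m - j := by
  rw [triangleRow, Finset.card_image_of_injective _ fun a b h => (Prod.mk.inj h).1, Int.card_Icc]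
  omega

theorem sum_range_sub_eq_choose (m : ℕ) : ∑ j ∈ Finset.range m, (m - j) = (m + 1).choose 2 := by
  induction m with
  | zero => rfl
  | succ m ih =>
    rw [Finset.sum_range_succ', Nat.choose_succ_succ', Nat.choose_one_right, ← ih]
    simp [add_comm]

theorem card_triangleLatticePoints (m : ℕ) :
    (triangleLatticePoints m).card = (m + 1).choose 2 + 1 := by
  have hrows : ((Finset.range m).biUnion (triangleRow m)).card = (m + 1).choose 2 := by
    rw [Finset.card_biUnion, Finset.sum_congr rfl fun j _ => card_triangleRow m j,
      sum_range_sub_eq_choose]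
    intro i _ j _ hij
    simp only [Finset.disjoint_left, triangleRow, Finset.mem_image]
    rintro _ ⟨_, _, rfl⟩ ⟨_, _, h⟩
    exact hij (by exact_mod_cast (Prod.mk.inj h).2.symm)
  rw [triangleLatticePoints, Finset.card_insert_of_notMem, hrows]
  simp [triangleRow]

/-- The triangle with vertices (-1,-1), (m-1,0), ((2m-3)/4, (2m-1)/2) contains exactly
`choose (m+1) 2 + 1` lattice points. -/
theorem stmt6 (m : ℕ) (hm : 1 ≤ m) :
    {p : ℤ × ℤ | toR p ∈ convexHull ℝ
        {((-1 : ℝ), (-1 : ℝ)), ((m : ℝ) - 1, 0),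
          ((2 * (m : ℝ) - 3) / 4, (2 * (m : ℝ) - 1) / 2)}}.ncard
      = Nat.choose (m + 1) 2 + 1 := by
  have hpoints : {p : ℤ × ℤ | toR p ∈ triangle m} = triangleLatticePoints m := by
    ext ⟨x, y⟩
    rw [Set.mem_ofPred_eq, Finset.mem_coe, mem_triangleLatticePoints_iff hm, toR,
      mem_triangle_iff hm]
    norm_cast
  change {p : ℤ × ℤ | toR p ∈ triangle m}.ncard = _
  rw [hpoints, Set.ncard_coe_finset, card_triangleLatticePoints]
end
end

section
/- Define a sequence of Laurent polynomials over ℚ by ξ₁ = 1 − 1/(xy) and ξ_{m+1} = (x−1)ξ_m + y^{-1}(y−1)^{m+1}. Then for every m ≥ 1, ξ_m vanishes to order at least m at (1,1), i.e., all partial derivatives of ξ_m of order < m vanish at the point (1,1). -/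
noncomputable section

/-- The variable `x`. -/
def Xv (K : Type*) [Field K] : LP K := AddMonoidAlgebra.single ((1 : ℤ), (0 : ℤ)) 1

/-- The variable `y`. -/
def Yv (K : Type*) [Field K] : LP K := AddMonoidAlgebra.single ((0 : ℤ), (1 : ℤ)) 1

/-- The maximal ideal of the point `(1,1)` of the torus, generated by `x - 1` and `y - 1`.
A Laurent polynomial vanishes to order at least `m` at `(1,1)` iff it lies in the `m`-th
power of this ideal. -/
def ptIdeal (K : Type*) [Field K] : Ideal (LP K) :=
  Ideal.span {Xv K - 1, Yv K - 1}

/-- The Laurent polynomial `ξ₁ = 1 - 1/(xy)`. -/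
def xiOne (K : Type*) [Field K] : LP K :=
  1 - AddMonoidAlgebra.single ((-1 : ℤ), (-1 : ℤ)) 1

/-- The Laurent polynomial `ξ₂ = 1/(xy) - 3 + x + y`. -/
def xiTwo (K : Type*) [Field K] : LP K :=
  AddMonoidAlgebra.single ((-1 : ℤ), (-1 : ℤ)) 1 - 3 + Xv K + Yv K

/-- The sequence `ξ₁ = 1 − 1/(xy)`, `ξ_{m+1} = (x−1)ξ_m + y⁻¹(y−1)^{m+1}`,
indexed here so that `xiA m = ξ_{m+1}`. -/
def xiA : ℕ → LP ℚ
  | 0 => xiOne ℚ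
  | n + 1 => (Xv ℚ - 1) * xiA n
      + AddMonoidAlgebra.single ((0 : ℤ), (-1 : ℤ)) 1 * (Yv ℚ - 1) ^ (n + 2)

/-! `ξ₁ = (xy)⁻¹ (xy - 1)` and `xy - 1 = (x - 1) y + (y - 1)` lie in the ideal `𝔪` of the
point `(1,1)`. The recursion multiplies `ξ_m ∈ 𝔪 ^ m` by `x - 1 ∈ 𝔪` and adds a multiple of
`(y - 1) ^ (m + 1) ∈ 𝔪 ^ (m + 1)`, so each step raises the order of vanishing by one. -/

section

variable (K : Type*) [Field K]

lemma Xv_sub_one_mem_ptIdeal : Xv K - 1 ∈ ptIdeal K := Ideal.subset_span (Or.inl rfl)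

lemma Yv_sub_one_mem_ptIdeal : Yv K - 1 ∈ ptIdeal K := Ideal.subset_span (Or.inr rfl)

lemma Xv_mul_Yv_sub_one_mem_ptIdeal : Xv K * Yv K - 1 ∈ ptIdeal K := by
  have h : Xv K * Yv K - 1 = (Xv K - 1) * Yv K + (Yv K - 1) := by ring
  rw [h]
  exact add_mem (Ideal.mul_mem_right _ _ (Xv_sub_one_mem_ptIdeal K))
    (Yv_sub_one_mem_ptIdeal K)

lemma xiOne_eq_mul :
    xiOne K = AddMonoidAlgebra.single ((-1 : ℤ), (-1 : ℤ)) 1 * (Xv K * Yv K - 1) := by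
  have hXY : Xv K * Yv K = AddMonoidAlgebra.single ((1 : ℤ), (1 : ℤ)) 1 := by
    simp [Xv, Yv, AddMonoidAlgebra.single_mul_single]
  rw [hXY, mul_sub, mul_one, AddMonoidAlgebra.single_mul_single]
  simp [xiOne, AddMonoidAlgebra.one_def, Prod.zero_eq_mk]

lemma xiOne_mem_ptIdeal : xiOne K ∈ ptIdeal K := by
  rw [xiOne_eq_mul]
  exact Ideal.mul_mem_left _ _ (Xv_mul_Yv_sub_one_mem_ptIdeal K)

end

lemma xiA_mem_ptIdeal_pow (n : ℕ) : xiA n ∈ ptIdeal ℚ ^ (n + 1) := by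
  induction n with
  | zero => simpa [xiA] using xiOne_mem_ptIdeal ℚ
  | succ n ih =>
    have hx : (Xv ℚ - 1) * xiA n ∈ ptIdeal ℚ ^ (n + 2) :=
      pow_succ' (ptIdeal ℚ) (n + 1) ▸ Ideal.mul_mem_mul (Xv_sub_one_mem_ptIdeal ℚ) ih
    have hy : (Yv ℚ - 1) ^ (n + 2) ∈ ptIdeal ℚ ^ (n + 2) :=
      Ideal.pow_mem_pow (Yv_sub_one_mem_ptIdeal ℚ) (n + 2)
    exact add_mem hx (Ideal.mul_mem_left _ _ hy)

/-- For every `m ≥ 1`, the Laurent polynomial `ξ_m` of the first family vanishes to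
order at least `m` at the point `(1,1)`. -/
theorem stmt17 (m : ℕ) (hm : 1 ≤ m) : xiA (m - 1) ∈ ptIdeal ℚ ^ m := by
  obtain ⟨n, rfl⟩ := Nat.exists_eq_add_of_le' hm
  simpa using xiA_mem_ptIdeal_pow n
end
end
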